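/- arXiv:2311.09311 — 11 statements merged into one kernel-verified Lean document; each statement's English description precedes it below -/
import Mathlib

section
/- If B is a Rota–Baxter operator of weight 1 on a group G, then for every g ∈ G, B(g)⁻¹ = B(B(g)⁻¹ g⁻¹ B(g)). -/
/-- `(B g)⁻¹ = B ((B g)⁻¹ * g⁻¹ * B g)` for a Rota–Baxter operator of weight 1. -/
theorem rb_inv {G : Type*} [Group G] (B : G → G)
    (hB : ∀ g h : G, B g * B h = B (g * B g * h * (B g)⁻¹)) :
    ∀ g : G, (B g)⁻¹ = B ((B g)⁻¹ * g⁻¹ * B g) := by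
  have h1 : B 1 = 1 := by
    have := hB 1 1
    simp at this
    exact this
  intro g
  have := hB g ((B g)⁻¹ * g⁻¹ * B g)
  have key : g * B g * ((B g)⁻¹ * g⁻¹ * B g) * (B g)⁻¹ = 1 := by group
  rw [key, h1] at this
  exact inv_eq_of_mul_eq_one_right this
end

section
/- Let (G, ·, B) be a Rota–Baxter group of weight 1. Then the binary operation g * h = g·B(g)·h·B(g)⁻¹ makes G into a group (with the same identity element, and with inverse of g given by B(g)⁻¹ g⁻¹ B(g)). -/
/-!
Both Rota–Baxter consequences needed are instances of the defining identity: with `g = h = 1`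
it gives `B 1 * B 1 = B 1`, so `B 1 = 1`; with `h = (B g)⁻¹ g⁻¹ B g` the argument on the right
collapses to `1`, so `B` sends the proposed inverse of `g` to `(B g)⁻¹`. Associativity is the
identity itself read as `B (g * h) = B g * B h`; all remaining equations are free-group identities.
-/

section RotaBaxter

variable {G : Type*} [Group G] {B : G → G}

theorem rotaBaxter_map_one (hB : ∀ g h : G, B g * B h = B (g * B g * h * (B g)⁻¹)) :
    B 1 = 1 := by
  have h := hB 1 1
  simp only [one_mul, mul_one, mul_inv_cancel] at h
  exact mul_eq_left.mp h

theorem rotaBaxter_map_derived_inv (hB : ∀ g h : G, B g * B h = B (g * B g * h * (B g)⁻¹))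
    (g : G) : B ((B g)⁻¹ * g⁻¹ * B g) = (B g)⁻¹ := by
  have h := hB g ((B g)⁻¹ * g⁻¹ * B g)
  have h_arg : g * B g * ((B g)⁻¹ * g⁻¹ * B g) * (B g)⁻¹ = 1 := by group
  rw [h_arg, rotaBaxter_map_one hB] at h
  exact eq_inv_of_mul_eq_one_right h

end RotaBaxter

/-- The derived operation `g * h = g ⬝ B g ⬝ h ⬝ (B g)⁻¹` of a Rota–Baxter group
is again a group operation, with the same identity element and with inverse
of `g` given by `(B g)⁻¹ * g⁻¹ * B g`. -/
theorem rb_derived_group {G : Type*} [Group G] (B : G → G)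
    (hB : ∀ g h : G, B g * B h = B (g * B g * h * (B g)⁻¹)) :
    (∀ g h k : G,
        ((g * B g * h * (B g)⁻¹) * B (g * B g * h * (B g)⁻¹) * k
          * (B (g * B g * h * (B g)⁻¹))⁻¹)
        = g * B g * (h * B h * k * (B h)⁻¹) * (B g)⁻¹) ∧
    (∀ g : G, (1 : G) * B 1 * g * (B 1)⁻¹ = g) ∧
    (∀ g : G, g * B g * 1 * (B g)⁻¹ = g) ∧
    (∀ g : G, g * B g * ((B g)⁻¹ * g⁻¹ * B g) * (B g)⁻¹ = 1) ∧
    (∀ g : G, ((B g)⁻¹ * g⁻¹ * B g) * B ((B g)⁻¹ * g⁻¹ * B g) * g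
        * (B ((B g)⁻¹ * g⁻¹ * B g))⁻¹ = 1) := by
  refine ⟨fun g h k => ?_, fun g => ?_, fun g => ?_, fun g => ?_, fun g => ?_⟩
  · rw [← hB g h]
    group
  · rw [rotaBaxter_map_one hB]
    group
  · group
  · group
  · rw [rotaBaxter_map_derived_inv hB]
    group
end

section
/- Let (G, ·, B) be a Rota–Baxter group of weight 1 and let (G, *) be the group with multiplication g * h = g·B(g)·h·B(g)⁻¹. Then B is also a Rota–Baxter operator of weight 1 on (G, *), i.e. B(g)*B(h) = B(g * B(g) * h * (B(g))^{-*}) for all g,h, where x^{-*} denotes the inverse in (G,*). -/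
/-- `B` is also a Rota–Baxter operator of weight 1 on the derived group `(G, *)`,
where `g * h = g ⬝ B g ⬝ h ⬝ (B g)⁻¹` and the `*`-inverse of `g` is
`(B g)⁻¹ g⁻¹ (B g)`. -/
theorem rb_on_derived_group {G : Type*} [Group G] (B : G → G)
    (hB : ∀ g h : G, B g * B h = B (g * B g * h * (B g)⁻¹))
    (star : G → G → G) (hstar : ∀ g h : G, star g h = g * B g * h * (B g)⁻¹)
    (sinv : G → G) (hsinv : ∀ g : G, sinv g = (B g)⁻¹ * g⁻¹ * B g) :
    ∀ g h : G, star (B g) (B h) = B (star (star (star g (B g)) h) (sinv (B g))) := by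
  have h1 : B 1 = 1 := by
    have h := hB 1 1
    have harg : (1 : G) * B 1 * 1 * (B 1)⁻¹ = 1 := by group
    rw [harg] at h
    exact mul_left_cancel (h.trans (mul_one (B 1)).symm)
  have hinv : ∀ x : G, B ((B x)⁻¹ * x⁻¹ * B x) = (B x)⁻¹ := by
    intro x
    have h := hB x ((B x)⁻¹ * x⁻¹ * B x)
    have harg : x * B x * ((B x)⁻¹ * x⁻¹ * B x) * (B x)⁻¹ = 1 := by group
    rw [harg, h1] at h
    exact (inv_eq_of_mul_eq_one_right h).symm
  intro g h
  have hBa : B (star g (B g)) = B g * B (B g) := by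
    rw [hstar]; exact (hB g (B g)).symm
  have hBy : B (star (star g (B g)) h) = B g * B (B g) * B h := by
    rw [hstar (star g (B g)) h, ← hB, hBa]
  have hfinal : B (star (star (star g (B g)) h) (sinv (B g))) =
      B g * B (B g) * B h * (B (B g))⁻¹ := by
    rw [hstar, ← hB, hsinv, hinv (B g), hBy]
  rw [hfinal, hstar]
end

section
/- A map B : G → G is a Rota–Baxter operator of weight 1 (i.e. B(g)B(h) = B(g B(g) h B(g)⁻¹)) if and only if the map C : G → G defined by C(g) = B(g⁻¹) is a Rota–Baxter operator of weight −1 (i.e. C(g)C(h) = C(C(g) h C(g)⁻¹ g)). This gives a bijection between Rota–Baxter operators of weight 1 and weight −1 on G. -/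
/-- `B` is a Rota–Baxter operator of weight `1` iff `C g = B g⁻¹` is a
Rota–Baxter operator of weight `-1`. -/
theorem rb_weight_one_iff_weight_neg_one {G : Type*} [Group G] (B C : G → G)
    (hC : ∀ g : G, C g = B g⁻¹) :
    (∀ g h : G, B g * B h = B (g * B g * h * (B g)⁻¹)) ↔
    (∀ g h : G, C g * C h = C (C g * h * (C g)⁻¹ * g)) := by
  constructor
  · intro hB g h
    have : C g * h * (C g)⁻¹ * g = (g⁻¹ * B g⁻¹ * h⁻¹ * (B g⁻¹)⁻¹)⁻¹ := by
      rw [hC]; group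
    rw [this, hC g, hC h, hC, inv_inv, ← hB g⁻¹ h⁻¹]
  · intro hCrb g h
    have h1 : B g = C g⁻¹ := by rw [hC, inv_inv]
    have h2 : B h = C h⁻¹ := by rw [hC, inv_inv]
    have h3 : g * B g * h * (B g)⁻¹ = (C g⁻¹ * h⁻¹ * (C g⁻¹)⁻¹ * g⁻¹)⁻¹ := by
      rw [← h1]; group
    rw [h3, ← hC, h1, h2, hCrb g⁻¹ h⁻¹]
end

section
/- Let H and G be groups, Ψ : G → Aut(H) an action of G on H, and B : H → G a map. Then B is a relative Rota–Baxter operator (i.e. B(h)B(k) = B(h · Ψ_{B(h)}(k)) for all h,k ∈ H) if and only if the set Gr(B) = {(B(h), h) : h ∈ H} is a subgroup of the semidirect product H ⋊_Ψ G. -/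
/-- `B : H → G` is a relative Rota–Baxter operator with respect to the action `Ψ`
iff its graph `{(B h, h) : h ∈ H}` is a subgroup of the semidirect product
`H ⋊[Ψ] G`. -/
theorem relative_rb_iff_graph_subgroup {H G : Type*} [Group H] [Group G]
    (Ψ : G →* MulAut H) (B : H → G) :
    (∀ h k : H, B h * B k = B (h * Ψ (B h) k)) ↔
    ∃ K : Subgroup (H ⋊[Ψ] G),
      (K : Set (H ⋊[Ψ] G)) = Set.range (fun h : H => (⟨h, B h⟩ : H ⋊[Ψ] G)) := by
  constructor
  · intro hB
    have hB1 : B 1 = 1 := by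
      have := hB 1 1
      simp at this
      exact this
    refine ⟨{ carrier := Set.range (fun h : H => (⟨h, B h⟩ : H ⋊[Ψ] G))
              mul_mem' := ?_
              one_mem' := ?_
              inv_mem' := ?_ }, rfl⟩
    · rintro a b ⟨h, rfl⟩ ⟨k, rfl⟩
      refine ⟨h * Ψ (B h) k, ?_⟩
      simp only [SemidirectProduct.ext_iff]
      exact ⟨rfl, (hB h k).symm⟩
    · exact ⟨1, by simp [SemidirectProduct.ext_iff, hB1]⟩
    · rintro a ⟨h, rfl⟩
      refine ⟨Ψ (B h)⁻¹ h⁻¹, ?_⟩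
      have key : B h * B (Ψ (B h)⁻¹ h⁻¹) = 1 := by
        rw [hB h (Ψ (B h)⁻¹ h⁻¹)]
        simp [hB1]
      have hinv : B (Ψ (B h)⁻¹ h⁻¹) = (B h)⁻¹ := eq_inv_of_mul_eq_one_right key
      simp at hinv
      simp [SemidirectProduct.ext_iff, hinv]
  · rintro ⟨K, hK⟩ h k
    have hh : (⟨h, B h⟩ : H ⋊[Ψ] G) ∈ K := by rw [SetLike.mem_coe.symm, hK]; exact ⟨h, rfl⟩
    have hk : (⟨k, B k⟩ : H ⋊[Ψ] G) ∈ K := by rw [SetLike.mem_coe.symm, hK]; exact ⟨k, rfl⟩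
    have hmul := K.mul_mem hh hk
    rw [SetLike.mem_coe.symm, hK] at hmul
    obtain ⟨m, hm⟩ := hmul
    simp only [SemidirectProduct.ext_iff] at hm
    obtain ⟨h1, h2⟩ := hm
    simp only [SemidirectProduct.mul_left, SemidirectProduct.mul_right] at h1 h2
    rw [← h2, h1]
end

section
/- Let H and G be groups, Ψ : G → Aut(H) an action, and B : H → G a relative Rota–Baxter operator. Then the operation h ∘ k = h · Ψ_{B(h)}(k) makes H into a group, and B : (H, ∘) → G is a group homomorphism. -/
/-!
The Rota–Baxter identity says exactly that `B` turns `h ∘ k = h * Ψ_{B h}(k)` into the product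
of `G`. Since `Ψ` is a homomorphism into `MulAut H`, associativity of `∘` then reduces to
associativity in `H`. The inverse of `h` is `Ψ_{B h}⁻¹(h⁻¹)`: it is a right inverse by
construction, its image under `B` is `(B h)⁻¹`, and this makes it a left inverse as well.
-/

def IsRelativeRotaBaxter {H G : Type*} [Group H] [Group G] (Ψ : G →* MulAut H) (B : H → G) :
    Prop :=
  ∀ h k : H, B h * B k = B (h * Ψ (B h) k)

namespace IsRelativeRotaBaxter

variable {H G : Type*} [Group H] [Group G]

def circ (Ψ : G →* MulAut H) (B : H → G) (h k : H) : H := h * Ψ (B h) k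

def circInv (Ψ : G →* MulAut H) (B : H → G) (h : H) : H := (Ψ (B h))⁻¹ h⁻¹

variable {Ψ : G →* MulAut H} {B : H → G}

theorem circ_one (h : H) : circ Ψ B h 1 = h := by
  simp [circ]

theorem circ_circInv (h : H) : circ Ψ B h (circInv Ψ B h) = 1 := by
  simp [circ, circInv]

theorem map_one (hB : IsRelativeRotaBaxter Ψ B) : B 1 = 1 := by
  simpa using hB 1 1

theorem one_circ (hB : IsRelativeRotaBaxter Ψ B) (h : H) : circ Ψ B 1 h = h := by
  simp [circ, hB.map_one]

theorem map_circ (hB : IsRelativeRotaBaxter Ψ B) (h k : H) :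
    B (circ Ψ B h k) = B h * B k :=
  (hB h k).symm

theorem circ_assoc (hB : IsRelativeRotaBaxter Ψ B) (a b c : H) :
    circ Ψ B (circ Ψ B a b) c = circ Ψ B a (circ Ψ B b c) := by
  conv_lhs => rw [circ, hB.map_circ]
  simp only [circ, _root_.map_mul, MulAut.mul_apply, mul_assoc]

theorem map_circInv (hB : IsRelativeRotaBaxter Ψ B) (h : H) : B (circInv Ψ B h) = (B h)⁻¹ := by
  refine eq_inv_of_mul_eq_one_right ?_
  rw [← hB.map_circ, circ_circInv, hB.map_one]

theorem circInv_circ (hB : IsRelativeRotaBaxter Ψ B) (h : H) :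
    circ Ψ B (circInv Ψ B h) h = 1 := by
  rw [circ, hB.map_circInv, _root_.map_inv, circInv, ← MulEquiv.map_mul, inv_mul_cancel,
    MulEquiv.map_one]

end IsRelativeRotaBaxter

/-- For a relative Rota–Baxter operator `B : H → G` with respect to `Ψ`, the
operation `h ∘ k = h ⬝ Ψ_{B h}(k)` makes `H` a group, and
`B : (H, ∘) → G` is a group homomorphism. -/
theorem relative_rb_descendent_group {H G : Type*} [Group H] [Group G]
    (Ψ : G →* MulAut H) (B : H → G)
    (hB : ∀ h k : H, B h * B k = B (h * Ψ (B h) k))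
    (circ : H → H → H) (hcirc : ∀ h k : H, circ h k = h * Ψ (B h) k) :
    (∀ a b c : H, circ (circ a b) c = circ a (circ b c)) ∧
    (∀ a : H, circ 1 a = a) ∧ (∀ a : H, circ a 1 = a) ∧
    (∀ a : H, ∃ b : H, circ a b = 1 ∧ circ b a = 1) ∧
    (∀ a b : H, B (circ a b) = B a * B b) := by
  obtain rfl : circ = IsRelativeRotaBaxter.circ Ψ B := funext₂ hcirc
  have hRB : IsRelativeRotaBaxter Ψ B := hB
  exact ⟨hRB.circ_assoc, hRB.one_circ, IsRelativeRotaBaxter.circ_one,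
    fun a => ⟨_, IsRelativeRotaBaxter.circ_circInv a, hRB.circInv_circ a⟩, hRB.map_circ⟩
end

section
/- Let (G, ·) be a group, (G, *) another group operation on the same set with the same identity, compatible with conjugation (g·(h₁ * h₂)·g⁻¹ = (g h₁ g⁻¹) * (g h₂ g⁻¹) for all g, h₁, h₂), and let B : G → G satisfy B(g₁)B(g₂) = B(g₁ * (B(g₁) g₂ B(g₁)⁻¹)). Define g₁ ∘ g₂ = g₁ * (B(g₁) g₂ B(g₁)⁻¹). Then (G, *, ∘) is a skew left brace, i.e. (G, ∘) is a group and a ∘ (b * c) = (a ∘ b) * a^{-*} * (a ∘ c) for all a, b, c, where a^{-*} is the inverse of a in (G, *). -/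
/-- Let `(G, ⬝)` be a group, `*` a second group operation on `G` with the same
identity, compatible with conjugation, and let `B` satisfy the relative
Rota–Baxter identity with respect to `*` and conjugation. Then
`(G, *, ∘)`, with `g₁ ∘ g₂ = g₁ * (B g₁ ⬝ g₂ ⬝ (B g₁)⁻¹)`, is a skew left brace. -/
theorem relative_rb_skew_brace {G : Type*} [Group G]
    (star : G → G → G) (sinv : G → G)
    (hassoc : ∀ a b c : G, star (star a b) c = star a (star b c))
    (hone_left : ∀ a : G, star 1 a = a) (hone_right : ∀ a : G, star a 1 = a)
    (hinv_right : ∀ a : G, star a (sinv a) = 1)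
    (hinv_left : ∀ a : G, star (sinv a) a = 1)
    (hcompat : ∀ g h₁ h₂ : G, g * star h₁ h₂ * g⁻¹ = star (g * h₁ * g⁻¹) (g * h₂ * g⁻¹))
    (B : G → G)
    (hB : ∀ g₁ g₂ : G, B g₁ * B g₂ = B (star g₁ (B g₁ * g₂ * (B g₁)⁻¹)))
    (circ : G → G → G)
    (hcirc : ∀ g₁ g₂ : G, circ g₁ g₂ = star g₁ (B g₁ * g₂ * (B g₁)⁻¹)) :
    (∀ a b c : G, circ (circ a b) c = circ a (circ b c)) ∧
    (∀ a : G, circ 1 a = a) ∧ (∀ a : G, circ a 1 = a) ∧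
    (∀ a : G, ∃ b : G, circ a b = 1 ∧ circ b a = 1) ∧
    (∀ a b c : G, circ a (star b c) = star (star (circ a b) (sinv a)) (circ a c)) := by

  have hB1 : B 1 = 1 := by
    have h := hB 1 1
    rw [mul_one, mul_inv_cancel, hone_left] at h
    have h' : B 1 * B 1 = B 1 * 1 := by rw [mul_one]; exact h
    exact mul_left_cancel h'
  have hBcirc : ∀ a b : G, B (circ a b) = B a * B b := by
    intro a b; rw [hcirc]; exact (hB a b).symm
  have hA : ∀ a b c : G, circ (circ a b) c = circ a (circ b c) := by
    intro a b c
    simp only [hcirc]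
    rw [← hB, hcompat, ← hassoc]
    congr 1
    group
  have hOneL : ∀ a : G, circ 1 a = a := by
    intro a; rw [hcirc, hB1, hone_left]; group
  have hOneR : ∀ a : G, circ a 1 = a := by
    intro a; rw [hcirc, mul_one, mul_inv_cancel, hone_right]
  have hInvR : ∀ a : G, circ a ((B a)⁻¹ * sinv a * B a) = 1 := by
    intro a
    rw [hcirc]
    have : B a * ((B a)⁻¹ * sinv a * B a) * (B a)⁻¹ = sinv a := by group
    rw [this, hinv_right]
  refine ⟨hA, hOneL, hOneR, ?_, ?_⟩
  · intro a
    refine ⟨(B a)⁻¹ * sinv a * B a, hInvR a, ?_⟩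
    set b := (B a)⁻¹ * sinv a * B a with hb
    set c := (B b)⁻¹ * sinv b * B b with hc
    calc circ b a = circ (circ b a) 1 := (hOneR _).symm
      _ = circ (circ b a) (circ b c) := by rw [hInvR b]
      _ = circ b (circ (circ a b) c) := by rw [hA, ← hA a b c]
      _ = circ b c := by rw [hInvR a, hOneL]
      _ = 1 := hInvR b
  · intro a b c
    simp only [hcirc]
    rw [hcompat, hassoc, hassoc, ← hassoc (sinv a) a, hinv_left, hone_left]
end

section
/- Let (G, ·, *) be a skew left brace and B : G → G a map satisfying B(g₁)B(g₂) = B(g₁ * (B(g₁) g₂ B(g₁)⁻¹)) (products B(g₁)g₂B(g₁)⁻¹ taken in (G,·)), such that ∘ defined by g₁ ∘ g₂ = g₁ * (B(g₁) g₂ B(g₁)⁻¹) is a group operation. Then (G, ·, ∘) is also a skew left brace: a ∘ (b·c) = (a ∘ b)·a⁻¹·(a ∘ c) for all a, b, c ∈ G. -/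
/-- If `(G, ⬝, *)` is a skew left brace and `B` satisfies the relative
Rota–Baxter identity so that `g₁ ∘ g₂ = g₁ * (B g₁ ⬝ g₂ ⬝ (B g₁)⁻¹)` is a group
operation, then `(G, ⬝, ∘)` is also a skew left brace. -/
theorem relative_rb_second_skew_brace {G : Type*} [Group G]
    (star : G → G → G) (sinv : G → G)
    (hassoc : ∀ a b c : G, star (star a b) c = star a (star b c))
    (hone_left : ∀ a : G, star 1 a = a) (hone_right : ∀ a : G, star a 1 = a)
    (hinv_right : ∀ a : G, star a (sinv a) = 1)
    (hinv_left : ∀ a : G, star (sinv a) a = 1)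
    (hbrace : ∀ a b c : G, star a (b * c) = star a b * a⁻¹ * star a c)
    (hcompat : ∀ g h₁ h₂ : G, g * star h₁ h₂ * g⁻¹ = star (g * h₁ * g⁻¹) (g * h₂ * g⁻¹))
    (B : G → G)
    (hB : ∀ g₁ g₂ : G, B g₁ * B g₂ = B (star g₁ (B g₁ * g₂ * (B g₁)⁻¹)))
    (circ : G → G → G)
    (hcirc : ∀ g₁ g₂ : G, circ g₁ g₂ = star g₁ (B g₁ * g₂ * (B g₁)⁻¹))
    (hcassoc : ∀ a b c : G, circ (circ a b) c = circ a (circ b c))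
    (hcone_left : ∀ a : G, circ 1 a = a) (hcone_right : ∀ a : G, circ a 1 = a)
    (hcinv : ∀ a : G, ∃ b : G, circ a b = 1 ∧ circ b a = 1) :
    ∀ a b c : G, circ a (b * c) = circ a b * a⁻¹ * circ a c := by
  intro a b c
  rw [hcirc, hcirc, hcirc]
  have h : B a * (b * c) * (B a)⁻¹ = (B a * b * (B a)⁻¹) * (B a * c * (B a)⁻¹) := by group
  rw [h, hbrace]
end

section
/- Let (H, *, Δ, ε, S) be a Hopf algebra with a relative Rota–Baxter operator B : H → G with respect to an action Φ satisfying the compatibility condition (Φ_{B(a_{(2)})}(b))_{(1)} ⊗ a_{(1)} * (Φ_{B(a_{(2)})}(b))_{(2)} = Φ_{B(a_{(1)})}(b_{(1)}) ⊗ a_{(2)} * Φ_{B(a_{(3)})}(b_{(2)}). Then the operation a ∘ b = a_{(1)} * Φ_{B(a_{(2)})}(b) is associative on H. -/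
open TensorProduct Coalgebra LinearMap

noncomputable section RRBaux

variable {k H G : Type*} [CommRing k]
    [Ring H] [HopfAlgebra k H] [Ring G] [HopfAlgebra k G]
    (B : H →ₗ[k] G) (Φ : G →ₗ[k] H →ₗ[k] H)

/-- `ψ (x ⊗ y) = Φ (B x) y`. -/
def rrbPsi : H ⊗[k] H →ₗ[k] H := TensorProduct.lift (Φ ∘ₗ B)

@[simp] lemma rrbPsi_tmul (x y : H) : rrbPsi B Φ (x ⊗ₜ[k] y) = Φ (B x) y := rfl

/-- `rrbGp ((u ⊗ v) ⊗ p) = u * Φ (B v) p`. -/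
def rrbGp : (H ⊗[k] H) ⊗[k] H →ₗ[k] H :=
  LinearMap.mul' k H ∘ₗ LinearMap.lTensor H (rrbPsi B Φ) ∘ₗ
    (TensorProduct.assoc k H H H).toLinearMap

@[simp] lemma rrbGp_tmul (u v p : H) :
    rrbGp B Φ ((u ⊗ₜ[k] v) ⊗ₜ[k] p) = u * Φ (B v) p := by
  simp [rrbGp, LinearMap.mul'_apply]

/-- `Ξ (x ⊗ y) = x₍₁₎ * Φ (B x₍₂₎) y`. -/
def rrbXi : H ⊗[k] H →ₗ[k] H := rrbGp B Φ ∘ₗ LinearMap.rTensor H (comul (R := k))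

lemma rrbXi_tmul (x y : H) :
    rrbXi B Φ (x ⊗ₜ[k] y) = rrbGp B Φ ((comul (R := k) x) ⊗ₜ[k] y) := by
  simp [rrbXi]

/-- generic: absorb a fixed right factor into an associator. -/
lemma rrb_lTensor_flip_mk {A M N P : Type*} [AddCommGroup A] [AddCommGroup M]
    [AddCommGroup N] [AddCommGroup P] [Module k A] [Module k M] [Module k N] [Module k P]
    (f : M ⊗[k] N →ₗ[k] P) (t : N) (ω : A ⊗[k] M) :
    lTensor A (f ∘ₗ (TensorProduct.mk k M N).flip t) ω
      = lTensor A f (TensorProduct.assoc k A M N (ω ⊗ₜ[k] t)) := by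
  induction ω using TensorProduct.induction_on with
  | zero => simp only [tmul_zero, map_zero, zero_tmul, add_tmul]
  | tmul u s => simp
  | add ω₁ ω₂ ih₁ ih₂ => simp only [map_add, add_tmul, ih₁, ih₂]

/-- "multiply the left factor into the first component":
`u ⊗ (x ⊗ y) ↦ (u * x) ⊗ y`. -/
def rrbM1 : H ⊗[k] (H ⊗[k] H) →ₗ[k] H ⊗[k] H :=
  rTensor H (LinearMap.mul' k H) ∘ₗ (TensorProduct.assoc k H H H).symm.toLinearMap

@[simp] lemma rrbM1_tmul (u : H) (x y : H) :
    rrbM1 (k := k) (u ⊗ₜ[k] (x ⊗ₜ[k] y)) = (u * x) ⊗ₜ[k] y := by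
  simp [rrbM1, LinearMap.mul'_apply]

set_option synthInstance.maxHeartbeats 1000000 in
lemma rrb_e4 (g : H →ₗ[k] H ⊗[k] H) :
    LinearMap.mul' k (H ⊗[k] H) ∘ₗ lTensor (H ⊗[k] H) g ∘ₗ
        (TensorProduct.assoc k H H H).symm.toLinearMap
      = rrbM1 ∘ₗ
          lTensor H (lTensor H (LinearMap.mul' k H) ∘ₗ
            (TensorProduct.assoc k H H H).toLinearMap ∘ₗ
            rTensor H (TensorProduct.comm k H H).toLinearMap ∘ₗ
            (TensorProduct.assoc k H H H).symm.toLinearMap ∘ₗ lTensor H g) := by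
  apply TensorProduct.ext'
  intro u s
  induction s using TensorProduct.induction_on with
  | zero => simp only [tmul_zero, map_zero]
  | tmul v w =>
    simp only [LinearMap.comp_apply, LinearEquiv.coe_coe, assoc_symm_tmul,
      lTensor_tmul]
    generalize g w = X
    induction X using TensorProduct.induction_on with
    | zero => simp only [tmul_zero, map_zero]
    | tmul x₁ x₂ =>
      simp [LinearMap.mul'_apply, Algebra.TensorProduct.tmul_mul_tmul]
    | add X₁ X₂ ih₁ ih₂ =>
      simp only [tmul_add, map_add, ih₁, ih₂]
  | add s₁ s₂ ih₁ ih₂ =>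
    simp only [tmul_add, map_add, ih₁, ih₂]

set_option synthInstance.maxHeartbeats 1000000 in
lemma rrb_e6 (F : H ⊗[k] H →ₗ[k] H) :
    rrbM1 ∘ₗ
        lTensor H (map (rrbPsi B Φ) F ∘ₗ
          (tensorTensorTensorComm k H H H H).toLinearMap) ∘ₗ
        (TensorProduct.assoc k H (H ⊗[k] H) (H ⊗[k] H)).toLinearMap
      = map (rrbGp B Φ) F ∘ₗ
          (tensorTensorTensorComm k (H ⊗[k] H) H H H).toLinearMap ∘ₗ
          rTensor (H ⊗[k] H) (TensorProduct.assoc k H H H).symm.toLinearMap := by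
  apply TensorProduct.ext'
  intro ω t
  induction ω using TensorProduct.induction_on with
  | zero => simp only [zero_tmul, map_zero]
  | tmul u s =>
    induction s using TensorProduct.induction_on with
    | zero => simp only [tmul_zero, zero_tmul, map_zero]
    | tmul v w =>
      induction t using TensorProduct.induction_on with
      | zero => simp only [tmul_zero, map_zero]
      | tmul p q =>
        simp [LinearMap.mul'_apply]
      | add t₁ t₂ ih₁ ih₂ => simp only [tmul_add, map_add, ih₁, ih₂]
    | add s₁ s₂ ih₁ ih₂ =>
      simp only [tmul_add, add_tmul, map_add, ih₁, ih₂]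
  | add ω₁ ω₂ ih₁ ih₂ =>
    simp only [add_tmul, map_add, ih₁, ih₂]

set_option synthInstance.maxHeartbeats 1000000 in
lemma rrb_xi_to_gp (F : H ⊗[k] H →ₗ[k] H) :
    map (rrbXi B Φ) F ∘ₗ (tensorTensorTensorComm k H H H H).toLinearMap
      = map (rrbGp B Φ) F ∘ₗ
          (tensorTensorTensorComm k (H ⊗[k] H) H H H).toLinearMap ∘ₗ
          rTensor (H ⊗[k] H) (rTensor H (comul (R := k))) := by
  apply TensorProduct.ext'
  intro s t
  induction s using TensorProduct.induction_on with
  | zero => simp only [zero_tmul, map_zero]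
  | tmul x y =>
    induction t using TensorProduct.induction_on with
    | zero => simp only [tmul_zero, map_zero]
    | tmul p q => simp [rrbXi_tmul]
    | add t₁ t₂ ih₁ ih₂ => simp only [tmul_add, map_add, ih₁, ih₂]
  | add s₁ s₂ ih₁ ih₂ =>
    simp only [add_tmul, map_add, ih₁, ih₂]

set_option synthInstance.maxHeartbeats 1000000 in
lemma rrb_k6 (F : H ⊗[k] H →ₗ[k] H) :
    LinearMap.mul' k H ∘ₗ
        lTensor H (LinearMap.mul' k H ∘ₗ map (rrbPsi B Φ) F ∘ₗ
          (tensorTensorTensorComm k H H H H).toLinearMap) ∘ₗ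
        (TensorProduct.assoc k H (H ⊗[k] H) (H ⊗[k] H)).toLinearMap
      = LinearMap.mul' k H ∘ₗ map (rrbGp B Φ) F ∘ₗ
          (tensorTensorTensorComm k (H ⊗[k] H) H H H).toLinearMap ∘ₗ
          rTensor (H ⊗[k] H) (TensorProduct.assoc k H H H).symm.toLinearMap := by
  apply TensorProduct.ext'
  intro ω t
  induction ω using TensorProduct.induction_on with
  | zero => simp only [zero_tmul, map_zero]
  | tmul u s =>
    induction s using TensorProduct.induction_on with
    | zero => simp only [tmul_zero, zero_tmul, map_zero]
    | tmul v w =>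
      induction t using TensorProduct.induction_on with
      | zero => simp only [tmul_zero, map_zero]
      | tmul p q => simp [LinearMap.mul'_apply, mul_assoc]
      | add t₁ t₂ ih₁ ih₂ => simp only [tmul_add, map_add, ih₁, ih₂]
    | add s₁ s₂ ih₁ ih₂ =>
      simp only [tmul_add, add_tmul, map_add, ih₁, ih₂]
  | add ω₁ ω₂ ih₁ ih₂ =>
    simp only [add_tmul, map_add, ih₁, ih₂]

lemma rrb_comul_mul (f : H →ₗ[k] H) :
    comul (R := k) ∘ₗ LinearMap.mul' k H ∘ₗ lTensor H f
      = LinearMap.mul' k (H ⊗[k] H) ∘ₗ map (comul (R := k)) ((comul (R := k)) ∘ₗ f) := by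
  apply TensorProduct.ext'
  intro x y
  simp [LinearMap.mul'_apply]

end RRBaux

/-- For a relative Rota–Baxter operator `B : H → G` on a Hopf algebra `H`
satisfying the compatibility condition
`(Φ_{B a₍₂₎} b)₍₁₎ ⊗ a₍₁₎ * (Φ_{B a₍₂₎} b)₍₂₎ = Φ_{B a₍₁₎} b₍₁₎ ⊗ a₍₂₎ * Φ_{B a₍₃₎} b₍₂₎`,
the operation `a ∘ b = a₍₁₎ * Φ_{B a₍₂₎} b` is associative. -/


theorem relative_rb_hopf_circ_assoc {k H G : Type*} [CommRing k]
    [Ring H] [HopfAlgebra k H] [Ring G] [HopfAlgebra k G]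
    (B : H →ₗ[k] G)
    (hBcomul : ∀ a : H,
      Coalgebra.comul (R := k) (B a) = TensorProduct.map B B (Coalgebra.comul (R := k) a))
    (hBcounit : ∀ a : H,
      Coalgebra.counit (R := k) (B a) = (Coalgebra.counit (R := k) a : k))
    (Φ : G →ₗ[k] H →ₗ[k] H)
    (hΦmul : ∀ g h : G, Φ (g * h) = (Φ g) ∘ₗ (Φ h))
    (hΦone : Φ 1 = LinearMap.id)
    (hΦalg : ∀ (g : G) (a b : H),
      Φ g (a * b) =
        LinearMap.mul' k H
          ((TensorProduct.map (Φ.flip a) (Φ.flip b)) (Coalgebra.comul (R := k) g)))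
    (hΦunit : ∀ g : G, Φ g 1 = (Coalgebra.counit (R := k) g : k) • (1 : H))
    -- the compatibility condition (3)
    (hcond : ∀ a b : H,
      LinearMap.lTensor H (LinearMap.mul' k H)
        ((TensorProduct.assoc k H H H)
          ((LinearMap.rTensor H (TensorProduct.comm k H H).toLinearMap)
            ((TensorProduct.assoc k H H H).symm
              ((LinearMap.lTensor H
                  ((Coalgebra.comul (R := k)) ∘ₗ ((Φ ∘ₗ B).flip b)))
                (Coalgebra.comul (R := k) a)))))
      =
      TensorProduct.map (TensorProduct.lift (Φ ∘ₗ B))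
        ((LinearMap.mul' k H) ∘ₗ
          (LinearMap.lTensor H (TensorProduct.lift (Φ ∘ₗ B))) ∘ₗ
          (TensorProduct.assoc k H H H).toLinearMap ∘ₗ
          (LinearMap.rTensor H (Coalgebra.comul (R := k))))
        ((TensorProduct.tensorTensorTensorComm k H H H H)
          ((Coalgebra.comul (R := k) a) ⊗ₜ[k] (Coalgebra.comul (R := k) b))))
    -- the relative Rota–Baxter identity
    (circ : H → H → H)
    (hcirc : ∀ a b : H,
      circ a b =
        LinearMap.mul' k H
          ((LinearMap.lTensor H ((Φ ∘ₗ B).flip b)) (Coalgebra.comul (R := k) a)))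
    (hRRB : ∀ a b : H, B a * B b = B (circ a b)) :
    ∀ a b c : H, circ (circ a b) c = circ a (circ b c) := by
  intro a b c
  -- `Ξ` computes `circ` on pure tensors
  have hΞ : ∀ x y : H, rrbXi B Φ (x ⊗ₜ[k] y) = circ x y := by
    intro x y
    rw [hcirc, rrbXi_tmul]
    generalize comul (R := k) x = s
    induction s using TensorProduct.induction_on with
    | zero => simp only [zero_tmul, map_zero]
    | tmul u v => simp [LinearMap.mul'_apply]
    | add s₁ s₂ ih₁ ih₂ => simp only [add_tmul, map_add, ih₁, ih₂]
  have k2' : ∀ x y : H, Φ (B (circ x y)) c = Φ (B x) (Φ (B y) c) := by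
    intro x y
    rw [← hRRB, hΦmul]
    rfl
  -- reformulated compatibility condition, as an equality of linear maps
  have hcondmap :
      (lTensor H (LinearMap.mul' k H) ∘ₗ (TensorProduct.assoc k H H H).toLinearMap ∘ₗ
        rTensor H (TensorProduct.comm k H H).toLinearMap ∘ₗ
        (TensorProduct.assoc k H H H).symm.toLinearMap ∘ₗ
        lTensor H ((comul (R := k)) ∘ₗ (Φ ∘ₗ B).flip b)) ∘ₗ (comul (R := k))
      = (((map (rrbPsi B Φ) (rrbXi B Φ) ∘ₗ
            (tensorTensorTensorComm k H H H H).toLinearMap) ∘ₗ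
          (TensorProduct.mk k (H ⊗[k] H) (H ⊗[k] H)).flip (comul (R := k) b)) ∘ₗ
          (comul (R := k))) := by
    apply LinearMap.ext
    intro z
    simpa only [rrbPsi, rrbXi, rrbGp, LinearMap.comp_assoc, LinearMap.comp_apply,
      LinearEquiv.coe_coe, LinearMap.flip_apply, TensorProduct.mk_apply] using hcond z b
  -- Sweedler: `Δ (a ∘ b) = (a₁ ∘ b₁) ⊗ (a₂ ∘ b₂)`
  have hcc : comul (R := k) (circ a b)
      = map (rrbXi B Φ) (rrbXi B Φ)
          ((tensorTensorTensorComm k H H H H)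
            ((comul (R := k) a) ⊗ₜ[k] (comul (R := k) b))) := by
    have hA1 : comul (R := k) (circ a b)
        = LinearMap.mul' k (H ⊗[k] H)
            (map (comul (R := k)) ((comul (R := k)) ∘ₗ (Φ ∘ₗ B).flip b)
              (comul (R := k) a)) := by
      rw [hcirc]
      simpa only [LinearMap.comp_apply] using
        LinearMap.congr_fun (rrb_comul_mul (k := k) ((Φ ∘ₗ B).flip b)) (comul (R := k) a)
    have hA2 : map (comul (R := k)) ((comul (R := k)) ∘ₗ (Φ ∘ₗ B).flip b) (comul (R := k) a)
        = lTensor (H ⊗[k] H) ((comul (R := k)) ∘ₗ (Φ ∘ₗ B).flip b)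
            ((TensorProduct.assoc k H H H).symm
              (lTensor H (comul (R := k)) (comul (R := k) a))) := by
      rw [coassoc_symm_apply, ← LinearMap.lTensor_comp_rTensor, LinearMap.comp_apply]
    have hA4 := LinearMap.congr_fun
      (rrb_e4 (k := k) ((comul (R := k)) ∘ₗ (Φ ∘ₗ B).flip b))
      (lTensor H (comul (R := k)) (comul (R := k) a))
    have hA5 := LinearMap.congr_fun (congrArg (lTensor H) hcondmap) (comul (R := k) a)
    have hA6 := rrb_lTensor_flip_mk (k := k)
      (f := map (rrbPsi B Φ) (rrbXi B Φ) ∘ₗ (tensorTensorTensorComm k H H H H).toLinearMap)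
      (t := comul (R := k) b) (ω := lTensor H (comul (R := k)) (comul (R := k) a))
    have hA7 := LinearMap.congr_fun (rrb_e6 B Φ (rrbXi B Φ))
      ((lTensor H (comul (R := k)) (comul (R := k) a)) ⊗ₜ[k] (comul (R := k) b))
    have hA9 := LinearMap.congr_fun (rrb_xi_to_gp B Φ (rrbXi B Φ))
      ((comul (R := k) a) ⊗ₜ[k] (comul (R := k) b))
    simp only [lTensor_comp, LinearMap.comp_apply, LinearEquiv.coe_coe, rTensor_tmul,
      coassoc_symm_apply] at hA2 hA4 hA5 hA6 hA7 hA9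
    rw [hA1, hA2, hA4, hA5, hA6, hA7, hA9]
  -- left-hand side
  have hB2 : ∀ t : H ⊗[k] H,
      ((Φ ∘ₗ B).flip c) (rrbXi B Φ t) = rrbPsi B Φ (lTensor H ((Φ ∘ₗ B).flip c) t) := by
    intro t
    induction t using TensorProduct.induction_on with
    | zero => simp only [map_zero]
    | tmul x y =>
      simp only [lTensor_tmul, rrbPsi_tmul, hΞ, LinearMap.flip_apply, LinearMap.comp_apply]
      exact k2' x y
    | add t₁ t₂ ih₁ ih₂ => simp only [map_add, ih₁, ih₂]
  have hLmid : lTensor H ((Φ ∘ₗ B).flip c)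
        (map (rrbXi B Φ) (rrbXi B Φ)
          ((tensorTensorTensorComm k H H H H)
            ((comul (R := k) a) ⊗ₜ[k] (comul (R := k) b))))
      = map (rrbXi B Φ) (rrbPsi B Φ ∘ₗ lTensor H ((Φ ∘ₗ B).flip c))
          ((tensorTensorTensorComm k H H H H)
            ((comul (R := k) a) ⊗ₜ[k] (comul (R := k) b))) := by
    generalize (tensorTensorTensorComm k H H H H)
      ((comul (R := k) a) ⊗ₜ[k] (comul (R := k) b)) = X
    induction X using TensorProduct.induction_on with
    | zero => simp only [map_zero]
    | tmul s t => simp only [map_tmul, lTensor_tmul, LinearMap.comp_apply, hB2]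
    | add X₁ X₂ ih₁ ih₂ => simp only [map_add, ih₁, ih₂]
  have hL : circ (circ a b) c
      = LinearMap.mul' k H
          (map (rrbGp B Φ) (rrbPsi B Φ ∘ₗ lTensor H ((Φ ∘ₗ B).flip c))
            ((tensorTensorTensorComm k (H ⊗[k] H) H H H)
              ((rTensor H (comul (R := k)) (comul (R := k) a)) ⊗ₜ[k] (comul (R := k) b)))) := by
    have h9 := LinearMap.congr_fun
      (rrb_xi_to_gp B Φ (rrbPsi B Φ ∘ₗ lTensor H ((Φ ∘ₗ B).flip c)))
      ((comul (R := k) a) ⊗ₜ[k] (comul (R := k) b))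
    simp only [LinearMap.comp_apply, LinearEquiv.coe_coe, rTensor_tmul] at h9
    rw [hcirc, hcc, hLmid, h9]
  -- right-hand side
  have k5 : rrbPsi B Φ ∘ₗ lTensor H (LinearMap.mul' k H ∘ₗ lTensor H ((Φ ∘ₗ B).flip c))
      = LinearMap.mul' k H ∘ₗ
          map (rrbPsi B Φ) (rrbPsi B Φ ∘ₗ lTensor H ((Φ ∘ₗ B).flip c)) ∘ₗ
          (tensorTensorTensorComm k H H H H).toLinearMap ∘ₗ
          rTensor (H ⊗[k] H) (comul (R := k)) := by
    apply TensorProduct.ext'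
    intro x s
    induction s using TensorProduct.induction_on with
    | zero => simp only [tmul_zero, map_zero]
    | tmul p q =>
      simp only [LinearMap.comp_apply, LinearEquiv.coe_coe, lTensor_tmul, rTensor_tmul,
        rrbPsi_tmul, LinearMap.mul'_apply, LinearMap.flip_apply]
      rw [hΦalg, hBcomul]
      generalize comul (R := k) x = s'
      induction s' using TensorProduct.induction_on with
      | zero => simp only [zero_tmul, map_zero]
      | tmul u v =>
        simp [LinearMap.mul'_apply]
      | add s₁ s₂ ih₁ ih₂ => simp only [map_add, add_tmul, ih₁, ih₂]
    | add s₁ s₂ ih₁ ih₂ => simp only [tmul_add, map_add, ih₁, ih₂]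
  have hC2 : (Φ ∘ₗ B).flip (circ b c)
      = (((LinearMap.mul' k H ∘ₗ
            map (rrbPsi B Φ) (rrbPsi B Φ ∘ₗ lTensor H ((Φ ∘ₗ B).flip c)) ∘ₗ
            (tensorTensorTensorComm k H H H H).toLinearMap) ∘ₗ
          (TensorProduct.mk k (H ⊗[k] H) (H ⊗[k] H)).flip (comul (R := k) b)) ∘ₗ
          (comul (R := k))) := by
    apply LinearMap.ext
    intro x
    have h5 := LinearMap.congr_fun k5 (x ⊗ₜ[k] (comul (R := k) b))
    simp only [LinearMap.comp_apply, LinearEquiv.coe_coe, lTensor_tmul, rTensor_tmul] at h5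
    simp only [LinearMap.comp_apply, LinearEquiv.coe_coe, LinearMap.flip_apply,
      TensorProduct.mk_apply]
    rw [hcirc b c, ← h5]
    simp only [rrbPsi_tmul]
  have hR : circ a (circ b c)
      = LinearMap.mul' k H
          (map (rrbGp B Φ) (rrbPsi B Φ ∘ₗ lTensor H ((Φ ∘ₗ B).flip c))
            ((tensorTensorTensorComm k (H ⊗[k] H) H H H)
              ((rTensor H (comul (R := k)) (comul (R := k) a)) ⊗ₜ[k] (comul (R := k) b)))) := by
    have hflip := rrb_lTensor_flip_mk (k := k)
      (f := LinearMap.mul' k H ∘ₗ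
          map (rrbPsi B Φ) (rrbPsi B Φ ∘ₗ lTensor H ((Φ ∘ₗ B).flip c)) ∘ₗ
          (tensorTensorTensorComm k H H H H).toLinearMap)
      (t := comul (R := k) b) (ω := lTensor H (comul (R := k)) (comul (R := k) a))
    have h6 := LinearMap.congr_fun
      (rrb_k6 B Φ (rrbPsi B Φ ∘ₗ lTensor H ((Φ ∘ₗ B).flip c)))
      ((lTensor H (comul (R := k)) (comul (R := k) a)) ⊗ₜ[k] (comul (R := k) b))
    simp only [lTensor_comp, LinearMap.comp_apply, LinearEquiv.coe_coe, rTensor_tmul,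
      coassoc_symm_apply] at hflip h6
    rw [hcirc a (circ b c), hC2]
    simp only [lTensor_comp, LinearMap.comp_apply, LinearEquiv.coe_coe]
    rw [hflip, h6]
  rw [hL, hR]
end

section
/- Let m ≥ 1, ζ ∈ k* with ζ^m = 1, l ∈ ℕ, and f(x) ∈ k[x] with deg f < l and f(ζx) = ζ^l f(x). Then in the free associative algebra A = k⟨g,x⟩/(xg − ζgx), the linear span J of the elements (g^m − 1)g^α x^β and g^α x^β (x^l − f(x)), for α, β ≥ 0, is a two-sided ideal of A. -/
/-- In the `k`-algebra `A` generated by `g, x` with the single relation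
`x g = ζ g x` (so that the monomials `g^α x^β` span `A`), with `ζ^m = 1` and
`f(ζx) = ζ^l f(x)`, `deg f < l`, the linear span `J` of the elements
`(g^m - 1) g^α x^β` and `g^α x^β (x^l - f(x))` is a two-sided ideal of `A`. -/
theorem span_is_two_sided_ideal {k A : Type*} [Field k] [Ring A] [Algebra k A]
    (m l : ℕ) (hm : 1 ≤ m) (hl : 1 ≤ l)
    (ζ : k) (hζ : ζ ≠ 0) (hζm : ζ ^ m = 1)
    (g x : A) (hrel : x * g = ζ • (g * x))
    (hgen : Algebra.adjoin k ({g, x} : Set A) = ⊤)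
    (hbasis : LinearIndependent k (fun p : ℕ × ℕ => g ^ p.1 * x ^ p.2))
    (hspan : Submodule.span k (Set.range (fun p : ℕ × ℕ => g ^ p.1 * x ^ p.2)) = ⊤)
    (f : Polynomial k) (hdeg : f.natDegree < l)
    (hf : f.comp (Polynomial.C ζ * Polynomial.X) = Polynomial.C (ζ ^ l) * f)
    (J : Submodule k A)
    (hJ : J = Submodule.span k
      (Set.range (fun p : ℕ × ℕ => (g ^ m - 1) * (g ^ p.1 * x ^ p.2)) ∪
       Set.range (fun p : ℕ × ℕ => g ^ p.1 * x ^ p.2 * (x ^ l - Polynomial.aeval x f)))) :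
    ∀ a ∈ J, ∀ b : A, b * a ∈ J ∧ a * b ∈ J := by
  classical
  -- commutation of x with powers of g
  have h1 : ∀ α : ℕ, x * g ^ α = ζ ^ α • (g ^ α * x) := by
    intro α
    induction α with
    | zero => simp
    | succ n ih =>
      rw [pow_succ, ← mul_assoc, ih, smul_mul_assoc, mul_assoc, hrel,
        mul_smul_comm, smul_smul, ← mul_assoc, ← pow_succ, pow_succ]
  have h2 : ∀ β : ℕ, x ^ β * g = ζ ^ β • (g * x ^ β) := by
    intro β
    induction β with
    | zero => simp
    | succ n ih =>
      calc x ^ (n + 1) * g = x ^ n * (x * g) := by rw [pow_succ, mul_assoc]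
      _ = x ^ n * (ζ • (g * x)) := by rw [hrel]
      _ = ζ • (x ^ n * g * x) := by rw [mul_smul_comm, mul_assoc]
      _ = ζ • ((ζ ^ n • (g * x ^ n)) * x) := by rw [ih]
      _ = ζ ^ (n + 1) • (g * x ^ (n + 1)) := by
          rw [smul_mul_assoc, smul_smul, ← pow_succ', mul_assoc, ← pow_succ]
  -- polynomial commutation
  have hcom : ∀ p : Polynomial k,
      Polynomial.aeval x p * g = g * Polynomial.aeval (ζ • x) p := by
    intro p
    induction p using Polynomial.induction_on' with
    | add p q hp hq => simp [map_add, add_mul, mul_add, hp, hq]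
    | monomial n c =>
      simp only [Polynomial.aeval_monomial, ← Algebra.smul_def, smul_pow]
      rw [smul_mul_assoc, h2, mul_smul_comm, mul_smul_comm]
  have hax : Polynomial.aeval (ζ • x) f = ζ ^ l • Polynomial.aeval x f := by
    have h3 : Polynomial.aeval x (f.comp (Polynomial.C ζ * Polynomial.X))
        = Polynomial.aeval (ζ • x) f := by
      rw [Polynomial.aeval_comp]; simp [Algebra.smul_def]
    rw [← h3, hf]
    simp [Algebra.smul_def]
  have hfg : Polynomial.aeval x f * g = ζ ^ l • (g * Polynomial.aeval x f) := by
    rw [hcom, hax, mul_smul_comm]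
  have hfx : Polynomial.aeval x f * x = x * Polynomial.aeval x f := by
    calc Polynomial.aeval x f * x = Polynomial.aeval x (f * Polynomial.X) := by simp
    _ = Polynomial.aeval x (Polynomial.X * f) := by rw [mul_comm]
    _ = x * Polynomial.aeval x f := by simp
  subst hJ
  set q : A := x ^ l - Polynomial.aeval x f with hq
  set u : ℕ × ℕ → A := fun p => (g ^ m - 1) * (g ^ p.1 * x ^ p.2) with hu
  set v : ℕ × ℕ → A := fun p => g ^ p.1 * x ^ p.2 * q with hv
  set J : Submodule k A := Submodule.span k (Set.range u ∪ Set.range v) with hJ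
  have humem : ∀ α β : ℕ, u (α, β) ∈ J :=
    fun α β => Submodule.subset_span (Set.mem_union_left _ ⟨(α, β), rfl⟩)
  have hvmem : ∀ α β : ℕ, v (α, β) ∈ J :=
    fun α β => Submodule.subset_span (Set.mem_union_right _ ⟨(α, β), rfl⟩)
  have hζpow : ∀ a : ℕ, ζ ^ (m + a) = ζ ^ a := by
    intro a; rw [pow_add, hζm, one_mul]
  -- monomial manipulation lemmas
  have hgw : ∀ a b : ℕ, g * (g ^ a * x ^ b) = g ^ (a + 1) * x ^ b := by
    intro a b; rw [← mul_assoc, ← pow_succ']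
  have hxw : ∀ a b : ℕ, x * (g ^ a * x ^ b) = ζ ^ a • (g ^ a * x ^ (b + 1)) := by
    intro a b; rw [← mul_assoc, h1, smul_mul_assoc, mul_assoc, ← pow_succ']
  have hwx : ∀ a b : ℕ, (g ^ a * x ^ b) * x = g ^ a * x ^ (b + 1) := by
    intro a b; rw [mul_assoc, ← pow_succ]
  have hwg : ∀ a b : ℕ, (g ^ a * x ^ b) * g = ζ ^ b • (g ^ (a + 1) * x ^ b) := by
    intro a b; rw [mul_assoc, h2, mul_smul_comm, ← mul_assoc, ← pow_succ]
  have hwu : ∀ a b : ℕ, u (a, b) = g ^ (m + a) * x ^ b - g ^ a * x ^ b := by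
    intro a b; simp only [hu]; rw [sub_mul, one_mul, ← mul_assoc, ← pow_add]
  have hqx : q * x = x * q := by
    rw [hq, sub_mul, mul_sub, hfx, ← pow_succ, ← pow_succ']
  have hqg : q * g = ζ ^ l • (g * q) := by
    rw [hq, sub_mul, mul_sub, hfg, h2 l, smul_sub]
  -- the eight generator products
  have Hgu : ∀ α β : ℕ, g * u (α, β) ∈ J := by
    intro α β
    have : g * u (α, β) = u (α + 1, β) := by
      rw [hwu, hwu, mul_sub, hgw, hgw, add_assoc]
    rw [this]; exact humem _ _
  have Hxu : ∀ α β : ℕ, x * u (α, β) ∈ J := by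
    intro α β
    have : x * u (α, β) = ζ ^ α • u (α, β + 1) := by
      rw [hwu, hwu, mul_sub, hxw, hxw, hζpow, smul_sub]
    rw [this]; exact J.smul_mem _ (humem _ _)
  have Hux : ∀ α β : ℕ, u (α, β) * x ∈ J := by
    intro α β
    have : u (α, β) * x = u (α, β + 1) := by
      rw [hwu, hwu, sub_mul, hwx, hwx]
    rw [this]; exact humem _ _
  have Hug : ∀ α β : ℕ, u (α, β) * g ∈ J := by
    intro α β
    have : u (α, β) * g = ζ ^ β • u (α + 1, β) := by
      rw [hwu, hwu, sub_mul, hwg, hwg, smul_sub, add_assoc]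
    rw [this]; exact J.smul_mem _ (humem _ _)
  have Hgv : ∀ α β : ℕ, g * v (α, β) ∈ J := by
    intro α β
    have : g * v (α, β) = v (α + 1, β) := by
      simp only [hv]; rw [← mul_assoc, hgw]
    rw [this]; exact hvmem _ _
  have Hxv : ∀ α β : ℕ, x * v (α, β) ∈ J := by
    intro α β
    have : x * v (α, β) = ζ ^ α • v (α, β + 1) := by
      simp only [hv]; rw [← mul_assoc, hxw, smul_mul_assoc]
    rw [this]; exact J.smul_mem _ (hvmem _ _)
  have Hvx : ∀ α β : ℕ, v (α, β) * x ∈ J := by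
    intro α β
    have : v (α, β) * x = v (α, β + 1) := by
      simp only [hv]; rw [mul_assoc, hqx, ← mul_assoc, hwx]
    rw [this]; exact hvmem _ _
  have Hvg : ∀ α β : ℕ, v (α, β) * g ∈ J := by
    intro α β
    have : v (α, β) * g = (ζ ^ l * ζ ^ β) • v (α + 1, β) := by
      simp only [hv]
      rw [mul_assoc, hqg, mul_smul_comm, ← mul_assoc, hwg, smul_mul_assoc, smul_smul]
    rw [this]
    exact J.smul_mem _ (hvmem _ _)
  -- left/right multiplication by a generator preserves J
  have key : ∀ y ∈ ({g, x} : Set A), ∀ a ∈ J, y * a ∈ J ∧ a * y ∈ J := by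
    rintro y hy a ha
    induction ha using Submodule.span_induction with
    | mem c hc =>
      rcases hc with ⟨⟨α, β⟩, rfl⟩ | ⟨⟨α, β⟩, rfl⟩
      · rcases hy with rfl | rfl
        · exact ⟨Hgu α β, Hug α β⟩
        · exact ⟨Hxu α β, Hux α β⟩
      · rcases hy with rfl | rfl
        · exact ⟨Hgv α β, Hvg α β⟩
        · exact ⟨Hxv α β, Hvx α β⟩
    | zero => simpa using ⟨J.zero_mem, J.zero_mem⟩
    | add c d hc hd ihc ihd =>
      exact ⟨by rw [mul_add]; exact J.add_mem ihc.1 ihd.1,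
             by rw [add_mul]; exact J.add_mem ihc.2 ihd.2⟩
    | smul r c hc ihc =>
      exact ⟨by rw [mul_smul_comm]; exact J.smul_mem _ ihc.1,
             by rw [smul_mul_assoc]; exact J.smul_mem _ ihc.2⟩
  suffices H : ∀ b ∈ Algebra.adjoin k ({g, x} : Set A), ∀ a ∈ J, b * a ∈ J ∧ a * b ∈ J by
    intro a ha b
    exact H b (by rw [hgen]; exact Algebra.mem_top) a ha
  intro b hb
  induction hb using Algebra.adjoin_induction with
  | mem y hy => exact key y hy
  | algebraMap r =>
    intro a ha
    constructor
    · rw [← Algebra.smul_def]; exact J.smul_mem _ ha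
    · rw [← Algebra.commutes, ← Algebra.smul_def]; exact J.smul_mem _ ha
  | add b c hb hc ihb ihc =>
    intro a ha
    exact ⟨by rw [add_mul]; exact J.add_mem (ihb a ha).1 (ihc a ha).1,
           by rw [mul_add]; exact J.add_mem (ihb a ha).2 (ihc a ha).2⟩
  | mul b c hb hc ihb ihc =>
    intro a ha
    exact ⟨by rw [mul_assoc]; exact (ihb _ (ihc a ha).1).1,
           by rw [← mul_assoc]; exact (ihc _ (ihb a ha).2).2⟩
end

section
/- The group of Hopf algebra automorphisms of the 4-dimensional Sweedler Hopf algebra H₄ over a field k (char k ≠ 2) is isomorphic to the multiplicative group k*; explicitly, every Hopf automorphism fixes g and sends x to cx for some c ∈ k*. -/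
/-!
A Hopf automorphism `ψ` sends the group-like `g` to a group-like element, and comparing
coefficients of `Δ y = y ⊗ y` in the basis `{1, g, x, gx}` shows the only ones are `1` and `g`;
so `ψ g = g`. Then `ψ x` is `(g, 1)`-skew-primitive, and the same comparison shows these are the
combinations `a (1 - g) + c x`; since `ψ x` still anticommutes with `g` and `char k ≠ 2`, `a = 0`.
Conversely, `H₄` is `ℤ/2`-graded with `x` odd, so scaling the odd part `span {x, gx}` by `c ≠ 0`
is an algebra automorphism; it respects `Δ` and `ε` because it does so on the generators `g, x`.
-/

open TensorProduct Coalgebra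

section Generators

variable {R A : Type*} [CommSemiring R] [Semiring A] [Bialgebra R A] {s : Set A}

lemma comul_map_of_adjoin_eq_top (hs : Algebra.adjoin R s = ⊤) (ψ : A →ₐ[R] A)
    (h : ∀ a ∈ s, comul (R := R) (ψ a) = map ψ.toLinearMap ψ.toLinearMap (comul a)) (a : A) :
    comul (R := R) (ψ a) = map ψ.toLinearMap ψ.toLinearMap (comul a) :=
  congr($(AlgHom.ext_of_adjoin_eq_top hs (φ₁ := (Bialgebra.comulAlgHom R A).comp ψ)
    (φ₂ := (Algebra.TensorProduct.map ψ ψ).comp (Bialgebra.comulAlgHom R A)) h) a)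

lemma counit_map_of_adjoin_eq_top (hs : Algebra.adjoin R s = ⊤) (ψ : A →ₐ[R] A)
    (h : ∀ a ∈ s, counit (R := R) (ψ a) = counit a) (a : A) :
    counit (R := R) (ψ a) = counit a :=
  congr($(AlgHom.ext_of_adjoin_eq_top hs (φ₁ := (Bialgebra.counitAlgHom R A).comp ψ)
    (φ₂ := Bialgebra.counitAlgHom R A) h) a)

end Generators

namespace Sweedler

variable {k H : Type*} [Field k]

section Algebra

variable [Ring H] [Algebra k H] {b : Module.Basis (Fin 4) k H} {g x : H}

lemma eq_zero_of_mul_g_eq_neg (h2 : (2 : k) ≠ 0) (hg : g ≠ 1) (hg2 : g * g = 1)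
    (hxg : x * g = -(g * x)) {a c : k}
    (h : (a • (1 - g) + c • x) * g = -(g * (a • (1 - g) + c • x))) : a = 0 := by
  simp only [add_mul, mul_add, sub_mul, mul_sub, smul_mul_assoc, mul_smul_comm, one_mul,
    mul_one, hg2, hxg] at h
  have h' : (2 * a) • (g - 1) = 0 := by linear_combination (norm := module) h
  simpa [h2, sub_eq_zero, hg] using h'

lemma eq_sum_repr (hb : ⇑b = ![1, g, x, g * x]) (y : H) :
    y = b.repr y 0 • 1 + b.repr y 1 • g + b.repr y 2 • x + b.repr y 3 • (g * x) := by
  conv_lhs => rw [← b.sum_repr y]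
  simp [Fin.sum_univ_four, hb]

lemma repr_one (hb : ⇑b = ![1, g, x, g * x]) : b.repr 1 = Finsupp.single 0 1 := by
  simpa [hb] using b.repr_self 0

lemma repr_g (hb : ⇑b = ![1, g, x, g * x]) : b.repr g = Finsupp.single 1 1 := by
  simpa [hb] using b.repr_self 1

lemma repr_x (hb : ⇑b = ![1, g, x, g * x]) : b.repr x = Finsupp.single 2 1 := by
  simpa [hb] using b.repr_self 2

lemma repr_g_mul_x (hb : ⇑b = ![1, g, x, g * x]) : b.repr (g * x) = Finsupp.single 3 1 := by
  simpa [hb] using b.repr_self 3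

lemma g_ne_one (hb : ⇑b = ![1, g, x, g * x]) : g ≠ 1 := by
  simpa [hb] using b.injective.ne (show (1 : Fin 4) ≠ 0 by decide)

lemma x_ne_zero (hb : ⇑b = ![1, g, x, g * x]) : x ≠ 0 := by
  simpa [hb] using b.ne_zero 2

lemma adjoin_eq_top (hb : ⇑b = ![1, g, x, g * x]) : Algebra.adjoin k {g, x} = ⊤ := by
  refine eq_top_iff.mpr fun y _ => ?_
  have hg : g ∈ Algebra.adjoin k {g, x} := Algebra.subset_adjoin (by simp)
  have hx : x ∈ Algebra.adjoin k {g, x} := Algebra.subset_adjoin (by simp)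
  rw [eq_sum_repr hb y]
  exact add_mem (add_mem (add_mem (Subalgebra.smul_mem _ (one_mem _) _)
    (Subalgebra.smul_mem _ hg _)) (Subalgebra.smul_mem _ hx _))
    (Subalgebra.smul_mem _ (mul_mem hg hx) _)

variable (b g x) in
noncomputable def scale (c : k) : H →ₗ[k] H := b.constr k ![1, g, c • x, c • (g * x)]

lemma scale_apply_one (hb : ⇑b = ![1, g, x, g * x]) (c : k) : scale b g x c 1 = 1 := by
  have h := b.constr_basis k ![1, g, c • x, c • (g * x)] 0
  rw [hb] at h
  exact h

lemma scale_apply_g (hb : ⇑b = ![1, g, x, g * x]) (c : k) : scale b g x c g = g := by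
  have h := b.constr_basis k ![1, g, c • x, c • (g * x)] 1
  rw [hb] at h
  exact h

lemma scale_apply_x (hb : ⇑b = ![1, g, x, g * x]) (c : k) : scale b g x c x = c • x := by
  have h := b.constr_basis k ![1, g, c • x, c • (g * x)] 2
  rw [hb] at h
  exact h

lemma scale_apply_g_mul_x (hb : ⇑b = ![1, g, x, g * x]) (c : k) :
    scale b g x c (g * x) = c • (g * x) := by
  have h := b.constr_basis k ![1, g, c • x, c • (g * x)] 3
  rw [hb] at h
  exact h

lemma scale_comp_scale (hb : ⇑b = ![1, g, x, g * x]) (c d : k) :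
    scale b g x c ∘ₗ scale b g x d = scale b g x (c * d) :=
  b.ext fun i => by
    fin_cases i <;> simp [hb, scale_apply_one hb, scale_apply_g hb, scale_apply_x hb,
      scale_apply_g_mul_x hb, smul_smul, mul_comm]

lemma scale_one (hb : ⇑b = ![1, g, x, g * x]) : scale b g x (1 : k) = LinearMap.id :=
  b.ext fun i => by
    fin_cases i <;> simp [hb, scale_apply_one hb, scale_apply_g hb, scale_apply_x hb,
      scale_apply_g_mul_x hb]

lemma scale_mul (hb : ⇑b = ![1, g, x, g * x]) (hg2 : g * g = 1) (hx2 : x * x = 0)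
    (hxg : x * g = -(g * x)) (c : k) (u v : H) :
    scale b g x c (u * v) = scale b g x c u * scale b g x c v := by
  have hgxg : g * x * g = -x := by rw [mul_assoc, hxg, mul_neg, ← mul_assoc, hg2, one_mul]
  have hggx : g * (g * x) = x := by rw [← mul_assoc, hg2, one_mul]
  have hxgx : x * (g * x) = 0 := by
    rw [← mul_assoc, hxg, neg_mul, mul_assoc, hx2, mul_zero, neg_zero]
  have hgxx : g * x * x = 0 := by rw [mul_assoc, hx2, mul_zero]
  have hgxgx : g * x * (g * x) = 0 := by rw [mul_assoc, hxgx, mul_zero]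
  have key : (LinearMap.mul k H).compr₂ (scale b g x c) =
      (LinearMap.mul k H).compl₁₂ (scale b g x c) (scale b g x c) :=
    LinearMap.ext_basis b b fun i j => by
      fin_cases i <;> fin_cases j <;>
        simp [hb, scale_apply_one hb, scale_apply_g hb, scale_apply_x hb, scale_apply_g_mul_x hb,
          hg2, hx2, hxg, hgxg, hggx, hxgx, hgxx, hgxgx]
  exact congr($key u v)

lemma exists_algEquiv_scale (hb : ⇑b = ![1, g, x, g * x]) (hg2 : g * g = 1) (hx2 : x * x = 0)
    (hxg : x * g = -(g * x)) (c : kˣ) : ∃ ψ : H ≃ₐ[k] H, ψ g = g ∧ ψ x = (c : k) • x := by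
  let φ (d : kˣ) : H →ₐ[k] H :=
    AlgHom.ofLinearMap (scale b g x d) (scale_apply_one hb d) (scale_mul hb hg2 hx2 hxg d)
  have inv (d e : kˣ) (h : d * e = 1) : (φ d).comp (φ e) = AlgHom.id k H :=
    AlgHom.toLinearMap_injective <| by
      simp [φ, scale_comp_scale hb, ← Units.val_mul, h, scale_one hb]
  exact ⟨AlgEquiv.ofAlgHom (φ c) (φ c⁻¹) (inv _ _ (mul_inv_cancel c)) (inv _ _ (inv_mul_cancel c)),
    scale_apply_g hb c, scale_apply_x hb c⟩

end Algebra

section Bialgebra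

variable [Ring H] [Bialgebra k H] {b : Module.Basis (Fin 4) k H} {g x : H}

lemma comul_g_mul_x (hg2 : g * g = 1) (hΔg : comul (R := k) g = g ⊗ₜ[k] g)
    (hΔx : comul (R := k) x = x ⊗ₜ[k] 1 + g ⊗ₜ[k] x) :
    comul (R := k) (g * x) = (g * x) ⊗ₜ[k] g + 1 ⊗ₜ[k] (g * x) := by
  rw [Bialgebra.comul_mul, hΔg, hΔx, mul_add, Algebra.TensorProduct.tmul_mul_tmul,
    Algebra.TensorProduct.tmul_mul_tmul, mul_one, hg2]

lemma comul_eq_sum_repr (hb : ⇑b = ![1, g, x, g * x]) (hg2 : g * g = 1)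
    (hΔg : comul (R := k) g = g ⊗ₜ[k] g) (hΔx : comul (R := k) x = x ⊗ₜ[k] 1 + g ⊗ₜ[k] x)
    (y : H) :
    comul (R := k) y = b.repr y 0 • (1 ⊗ₜ[k] 1) + b.repr y 1 • (g ⊗ₜ[k] g) +
      b.repr y 2 • (x ⊗ₜ[k] 1 + g ⊗ₜ[k] x) +
      b.repr y 3 • ((g * x) ⊗ₜ[k] g + 1 ⊗ₜ[k] (g * x)) := by
  conv_lhs => rw [eq_sum_repr hb y]
  simp only [map_add, map_smul, Bialgebra.comul_one, hΔg, hΔx, comul_g_mul_x hg2 hΔg hΔx]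
  rfl

lemma eq_one_or_eq_g_of_isGroupLikeElem (hb : ⇑b = ![1, g, x, g * x]) (hg2 : g * g = 1)
    (hΔg : comul (R := k) g = g ⊗ₜ[k] g) (hΔx : comul (R := k) x = x ⊗ₜ[k] 1 + g ⊗ₜ[k] x)
    {y : H} (hy : IsGroupLikeElem k y) : y = 1 ∨ y = g := by
  have hΔ := hy.comul_eq_tmul_self
  rw [comul_eq_sum_repr hb hg2 hΔg hΔx] at hΔ
  have coeff (i j : Fin 4) := congr((b.tensorProduct b).repr $hΔ (i, j))
  have h00 := coeff 0 0
  have h01 := coeff 0 1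
  have h11 := coeff 1 1
  have h02 := coeff 0 2
  have h20 := coeff 2 0
  have h13 := coeff 1 3
  have h31 := coeff 3 1
  simp [repr_one hb, repr_g hb, repr_x hb, repr_g_mul_x hb] at h00 h01 h11 h02 h20 h13 h31
  have h2 : b.repr y 2 = 0 := h02.elim id fun h => by simpa [h] using h20
  have h3 : b.repr y 3 = 0 := h13.elim id fun h => by simpa [h] using h31
  have hy' := eq_sum_repr hb y
  rw [h2, h3, zero_smul, zero_smul, add_zero, add_zero] at hy'
  rcases h01 with h1 | h0
  · rw [h1, zero_smul, add_zero] at hy'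
    have ha : b.repr y 0 ≠ 0 := fun h => hy.ne_zero (by rw [hy', h, zero_smul])
    left
    rw [hy', (mul_eq_left₀ ha).mp h00.symm, one_smul]
  · rw [h0, zero_smul, zero_add] at hy'
    have hb1 : b.repr y 1 ≠ 0 := fun h => hy.ne_zero (by rw [hy', h, zero_smul])
    right
    rw [hy', (mul_eq_left₀ hb1).mp h11.symm, one_smul]

lemma exists_eq_smul_one_sub_add_smul_x (hb : ⇑b = ![1, g, x, g * x]) (hg2 : g * g = 1)
    (hΔg : comul (R := k) g = g ⊗ₜ[k] g) (hΔx : comul (R := k) x = x ⊗ₜ[k] 1 + g ⊗ₜ[k] x)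
    {y : H} (hy : comul (R := k) y = y ⊗ₜ[k] 1 + g ⊗ₜ[k] y) :
    ∃ a c : k, y = a • (1 - g) + c • x := by
  rw [comul_eq_sum_repr hb hg2 hΔg hΔx] at hy
  have h10 := congr((b.tensorProduct b).repr $hy (1, 0))
  have h03 := congr((b.tensorProduct b).repr $hy (0, 3))
  simp [repr_one hb, repr_g hb, repr_x hb, repr_g_mul_x hb] at h10 h03
  refine ⟨b.repr y 0, b.repr y 2, ?_⟩
  conv_lhs => rw [eq_sum_repr hb y]
  rw [h03, eq_neg_of_add_eq_zero_left h10.symm]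
  module

end Bialgebra

end Sweedler

open Sweedler

/-- The Hopf automorphism group of the 4-dimensional Sweedler Hopf algebra `H₄`
(char k ≠ 2) is isomorphic to `kˣ`: every Hopf algebra automorphism `ψ` fixes
`g` and sends `x` to `c • x` for a unique `c ∈ kˣ`, and every such `c` arises
from a Hopf automorphism. -/
theorem sweedler_hopf_aut {k H : Type*} [Field k] (h2 : (2 : k) ≠ 0)
    [Ring H] [HopfAlgebra k H]
    (g x : H)
    (hbasis : ∃ b : Module.Basis (Fin 4) k H,
      b 0 = 1 ∧ b 1 = g ∧ b 2 = x ∧ b 3 = g * x)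
    (hg2 : g * g = 1) (hx2 : x * x = 0) (hxg : x * g = -(g * x))
    (hcomul_g : Coalgebra.comul (R := k) g = g ⊗ₜ[k] g)
    (hcomul_x : Coalgebra.comul (R := k) x = x ⊗ₜ[k] 1 + g ⊗ₜ[k] x)
    (hcounit_g : Coalgebra.counit (R := k) g = (1 : k))
    (hcounit_x : Coalgebra.counit (R := k) x = (0 : k)) :
    (∀ ψ : H ≃ₐ[k] H,
      (∀ a : H, Coalgebra.comul (R := k) (ψ a) =
        TensorProduct.map ψ.toLinearMap ψ.toLinearMap (Coalgebra.comul (R := k) a)) →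
      (∀ a : H, Coalgebra.counit (R := k) (ψ a) = (Coalgebra.counit (R := k) a : k)) →
      ψ g = g ∧ ∃! c : kˣ, ψ x = (c : k) • x) ∧
    (∀ c : kˣ, ∃ ψ : H ≃ₐ[k] H,
      (∀ a : H, Coalgebra.comul (R := k) (ψ a) =
        TensorProduct.map ψ.toLinearMap ψ.toLinearMap (Coalgebra.comul (R := k) a)) ∧
      (∀ a : H, Coalgebra.counit (R := k) (ψ a) = (Coalgebra.counit (R := k) a : k)) ∧
      ψ g = g ∧ ψ x = (c : k) • x) := by
  obtain ⟨b, hb0, hb1, hb2, hb3⟩ := hbasis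
  have hb : ⇑b = ![1, g, x, g * x] := by ext i; fin_cases i <;> simp [hb0, hb1, hb2, hb3]
  refine ⟨fun ψ hcom hcou => ?_, fun c => ?_⟩
  · have hψg : ψ g = g :=
      (eq_one_or_eq_g_of_isGroupLikeElem hb hg2 hcomul_g hcomul_x
        ⟨by rw [hcou, hcounit_g], by rw [hcom, hcomul_g]; rfl⟩).resolve_left
        fun h => g_ne_one hb (ψ.injective (h.trans (map_one ψ).symm))
    obtain ⟨a, c, hψx⟩ := exists_eq_smul_one_sub_add_smul_x hb hg2 hcomul_g hcomul_x
      (y := ψ x) (by rw [hcom, hcomul_x]; simp [hψg])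
    have hanti : ψ x * g = -(g * ψ x) := by
      simpa only [map_mul, map_neg, hψg] using congr(ψ $hxg)
    obtain rfl : a = 0 := eq_zero_of_mul_g_eq_neg h2 (g_ne_one hb) hg2 hxg (hψx ▸ hanti)
    rw [zero_smul, zero_add] at hψx
    have hc : c ≠ 0 := by
      rintro rfl
      exact x_ne_zero hb (ψ.injective (by rw [hψx, zero_smul, map_zero]))
    exact ⟨hψg, Units.mk0 c hc, hψx,
      fun d hd => Units.ext (smul_left_injective k (x_ne_zero hb) (hd.symm.trans hψx))⟩
  · obtain ⟨ψ, hψg, hψx⟩ := exists_algEquiv_scale hb hg2 hx2 hxg c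
    have hs := adjoin_eq_top hb
    refine ⟨ψ, comul_map_of_adjoin_eq_top hs ψ.toAlgHom ?_,
      counit_map_of_adjoin_eq_top hs ψ.toAlgHom ?_, hψg, hψx⟩
    · rintro a (rfl | rfl)
      · simp [hψg, hcomul_g]
      · simp [hψx, hψg, hcomul_x, smul_tmul']
    · rintro a (rfl | rfl)
      · simp [hψg]
      · simp [hψx, hcounit_x]
end
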